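/- Let E1, E2 be origin-centered ellipsoids with positive definite shape matrices Q1, Q2. Then the origin-centered ellipsoid with shape matrix Q1 ⊞ Q2 = (√(Tr Q1)+√(Tr Q2))(Q1/√(Tr Q1)+Q2/√(Tr Q2)) contains the Minkowski sum E1 + E2, i.e., for any x with x^T Q1^{-1} x ≤ 1 and y with y^T Q2^{-1} y ≤ 1, one has (x+y)^T (Q1 ⊞ Q2)^{-1} (x+y) ≤ 1. -/

import Mathlib

open Matrix Real

/-! For positive definite `A`, the quadratic form of `A⁻¹` is the Legendre dual of that of `A`:
`v ⬝ A⁻¹ v = max_z (2 z ⬝ v - z ⬝ A z)`, the maximum being attained at `z = A⁻¹ v`. Since the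
function maximised is additive in the pair `(A, v)`, this gives
`(x + y) ⬝ (A + B)⁻¹ (x + y) ≤ x ⬝ A⁻¹ x + y ⬝ B⁻¹ y`. Taking `A = Q₁ / λ`, `B = Q₂ / (1 - λ)`
with `λ = √Tr Q₁ / (√Tr Q₁ + √Tr Q₂)`, so that `A + B = Q₁ ⊞ Q₂`, bounds the left-hand side by
`λ + (1 - λ) = 1` on `E₁ + E₂`. -/

namespace Matrix.PosDef

variable {ι : Type*} [Fintype ι] {A B : Matrix ι ι ℝ}

lemma dotProduct_mulVec_comm (hA : A.PosDef) (v w : ι → ℝ) :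
    v ⬝ᵥ (A *ᵥ w) = w ⬝ᵥ (A *ᵥ v) := by
  have hT : Aᵀ = A := IsSymm.eq hA.1
  rw [dotProduct_mulVec, ← mulVec_transpose, hT, dotProduct_comm]

variable [DecidableEq ι]

lemma mulVec_inv_mulVec (hA : A.PosDef) (v : ι → ℝ) : A *ᵥ (A⁻¹ *ᵥ v) = v := by
  rw [mulVec_mulVec, mul_nonsing_inv A hA.det_pos.ne'.isUnit, one_mulVec]

lemma two_mul_dotProduct_sub_le (hA : A.PosDef) (z v : ι → ℝ) :
    2 * (z ⬝ᵥ v) - z ⬝ᵥ (A *ᵥ z) ≤ v ⬝ᵥ (A⁻¹ *ᵥ v) := by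
  have hsq := hA.posSemidef.dotProduct_mulVec_nonneg (z - A⁻¹ *ᵥ v)
  have hcross : (A⁻¹ *ᵥ v) ⬝ᵥ (A *ᵥ z) = z ⬝ᵥ v := by
    rw [hA.dotProduct_mulVec_comm, hA.mulVec_inv_mulVec]
  simp only [star_trivial, mulVec_sub, sub_dotProduct, dotProduct_sub, hA.mulVec_inv_mulVec,
    hcross] at hsq
  rw [dotProduct_comm (A⁻¹ *ᵥ v) v] at hsq
  linarith

lemma dotProduct_inv_add_mulVec_le (hA : A.PosDef) (hB : B.PosDef) (x y : ι → ℝ) :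
    (x + y) ⬝ᵥ ((A + B)⁻¹ *ᵥ (x + y)) ≤ x ⬝ᵥ (A⁻¹ *ᵥ x) + y ⬝ᵥ (B⁻¹ *ᵥ y) := by
  set z := (A + B)⁻¹ *ᵥ (x + y)
  have hquad : z ⬝ᵥ ((A + B) *ᵥ z) = z ⬝ᵥ (x + y) := by
    rw [(hA.add hB).mulVec_inv_mulVec]
  rw [add_mulVec, dotProduct_add, dotProduct_add] at hquad
  rw [dotProduct_comm (x + y), dotProduct_add]
  linarith [hA.two_mul_dotProduct_sub_le z x, hB.two_mul_dotProduct_sub_le z y]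

lemma dotProduct_inv_smul_mulVec (hA : A.PosDef) {c : ℝ} (hc : c ≠ 0) (v : ι → ℝ) :
    v ⬝ᵥ ((c • A)⁻¹ *ᵥ v) = c⁻¹ * v ⬝ᵥ (A⁻¹ *ᵥ v) := by
  have := invertibleOfNonzero hc
  rw [inv_smul A c hA.det_pos.ne'.isUnit, invOf_eq_inv, smul_mulVec, dotProduct_smul, smul_eq_mul]

end Matrix.PosDef

section Ellipsoid

open scoped Pointwise

variable {ι : Type*} [Fintype ι] [DecidableEq ι]

def ellipsoid (Q : Matrix ι ι ℝ) : Set (ι → ℝ) := {x | x ⬝ᵥ (Q⁻¹ *ᵥ x) ≤ 1}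

theorem ellipsoid_add_ellipsoid_subset {Q₁ Q₂ : Matrix ι ι ℝ} (hQ₁ : Q₁.PosDef)
    (hQ₂ : Q₂.PosDef) {a b : ℝ} (ha : 0 < a) (hb : 0 < b) :
    ellipsoid Q₁ + ellipsoid Q₂ ⊆ ellipsoid ((a + b) • (a⁻¹ • Q₁ + b⁻¹ • Q₂)) := by
  rintro _ ⟨x, hx, y, hy, rfl⟩
  have hsplit : (a + b) • (a⁻¹ • Q₁ + b⁻¹ • Q₂) = ((a + b) / a) • Q₁ + ((a + b) / b) • Q₂ := by
    rw [smul_add, smul_smul, smul_smul, div_eq_mul_inv, div_eq_mul_inv]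
  have hab : 0 < a + b := add_pos ha hb
  calc (x + y) ⬝ᵥ (((a + b) • (a⁻¹ • Q₁ + b⁻¹ • Q₂))⁻¹ *ᵥ (x + y))
      ≤ x ⬝ᵥ ((((a + b) / a) • Q₁)⁻¹ *ᵥ x) + y ⬝ᵥ ((((a + b) / b) • Q₂)⁻¹ *ᵥ y) := by
        rw [hsplit]
        exact (hQ₁.smul (by positivity)).dotProduct_inv_add_mulVec_le
          (hQ₂.smul (by positivity)) x y
    _ = a / (a + b) * x ⬝ᵥ (Q₁⁻¹ *ᵥ x) + b / (a + b) * y ⬝ᵥ (Q₂⁻¹ *ᵥ y) := by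
        rw [hQ₁.dotProduct_inv_smul_mulVec (by positivity),
          hQ₂.dotProduct_inv_smul_mulVec (by positivity), inv_div, inv_div]
    _ ≤ a / (a + b) * 1 + b / (a + b) * 1 := by
        gcongr
        exacts [hx, hy]
    _ = 1 := by field_simp

end Ellipsoid

theorem boxplus_contains_minkowski_sum {n : ℕ}
    (Q₁ Q₂ : Matrix (Fin n) (Fin n) ℝ) (hQ₁ : Q₁.PosDef) (hQ₂ : Q₂.PosDef)
    (x y : Fin n → ℝ)
    (hx : x ⬝ᵥ (Q₁⁻¹ *ᵥ x) ≤ 1) (hy : y ⬝ᵥ (Q₂⁻¹ *ᵥ y) ≤ 1) :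
    (x + y) ⬝ᵥ
        (((Real.sqrt Q₁.trace + Real.sqrt Q₂.trace) •
            ((Real.sqrt Q₁.trace)⁻¹ • Q₁ + (Real.sqrt Q₂.trace)⁻¹ • Q₂))⁻¹
          *ᵥ (x + y)) ≤ 1 := by
  cases isEmpty_or_nonempty (Fin n)
  · simp [dotProduct]
  · exact ellipsoid_add_ellipsoid_subset hQ₁ hQ₂ (sqrt_pos.2 hQ₁.trace_pos)
      (sqrt_pos.2 hQ₂.trace_pos) (Set.add_mem_add hx hy)
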